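/- arXiv:2510.16808 — 5 statements merged into one kernel-verified Lean document; each statement's English description precedes it below -/
import Mathlib

section
/- Let Q be the transition kernel on {0,...,n} with Q(k,k+1) = ((n-k)/n)·((k+α)/(n-1+α+β)), Q(k,k-1) = (k/n)·((n-k+β)/(n-1+α+β)), and Q(k,k) = 1 - Q(k,k+1) - Q(k,k-1), where α, β > 0 and n ≥ 1. Then the Beta-Binomial(n; α, β) distribution π(k) = C(n,k)(α)_k(β)_{n-k}/(α+β)_n satisfies πQ = π. -/
/-- Rising factorial (Pochhammer symbol). -/
def risingFactorial (a : ℝ) : ℕ → ℝ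
  | 0 => 1
  | m + 1 => risingFactorial a m * (a + m)

/-- Beta-Binomial weight `π(k) = C(n,k)·(α)_k·(β)_{n-k}/(α+β)_n`. -/
noncomputable def betaBinomialWeight (n : ℕ) (α β : ℝ) (k : ℕ) : ℝ :=
  (n.choose k : ℝ) * risingFactorial α k * risingFactorial β (n - k) /
    risingFactorial (α + β) n

/-- Copy-step (voter model) kernel on `{0,…,n}` with `α` zealots in state 1 and `β`
zealots in state 0:  `Q(j, j+1) = ((n-j)/n)·((j+α)/(n-1+α+β))`,
`Q(j, j-1) = (j/n)·((n-j+β)/(n-1+α+β))`, `Q(j,j)` the remaining mass, `0` otherwise.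
(The up/down rates vanish automatically at the boundaries `j = n` and `j = 0`.) -/
noncomputable def voterKernel (n : ℕ) (α β : ℝ) (j k : ℕ) : ℝ :=
  if k = j + 1 then (((n : ℝ) - j) / n) * ((j + α) / ((n : ℝ) - 1 + α + β))
  else if j = k + 1 then ((j : ℝ) / n) * (((n : ℝ) - j + β) / ((n : ℝ) - 1 + α + β))
  else if k = j then
    1 - (((n : ℝ) - j) / n) * ((j + α) / ((n : ℝ) - 1 + α + β))
      - ((j : ℝ) / n) * (((n : ℝ) - j + β) / ((n : ℝ) - 1 + α + β))
  else 0

lemma risingFactorial_pos {a : ℝ} (ha : 0 < a) (m : ℕ) : 0 < risingFactorial a m := by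
  induction m with
  | zero => simp [risingFactorial]
  | succ m ih =>
    simp only [risingFactorial]
    exact mul_pos ih (by positivity)

lemma db_core (α β : ℝ) (hα : 0 < α) (hβ : 0 < β) (n : ℕ) (hn : 1 ≤ n)
    (j : ℕ) (hj : j + 1 ≤ n) :
    betaBinomialWeight n α β j *
        ((((n : ℝ) - j) / n) * ((j + α) / ((n : ℝ) - 1 + α + β)))
      = betaBinomialWeight n α β (j + 1) *
        (((↑(j + 1) : ℝ) / n) * (((n : ℝ) - ↑(j + 1) + β) / ((n : ℝ) - 1 + α + β))) := by
  have hm : n - j = (n - (j + 1)) + 1 := by omega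
  have hcast : ((n - (j + 1) : ℕ) : ℝ) = (n : ℝ) - (j : ℝ) - 1 := by
    have : ((n - (j + 1) : ℕ) : ℝ) = (n : ℝ) - ((j : ℝ) + 1) := by
      rw [Nat.cast_sub hj]; push_cast; ring
    linarith
  have hc : ((n.choose (j + 1) : ℕ) : ℝ) * ((j : ℝ) + 1)
      = (n.choose j : ℝ) * ((n : ℝ) - (j : ℝ)) := by
    have h := Nat.choose_succ_right_eq n j
    have h2 : ((n.choose (j + 1) * (j + 1) : ℕ) : ℝ) = ((n.choose j * (n - j) : ℕ) : ℝ) := by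
      exact_mod_cast congrArg (Nat.cast : ℕ → ℝ) h
    push_cast [Nat.cast_sub (by omega : j ≤ n)] at h2
    linarith
  unfold betaBinomialWeight
  rw [hm]
  simp only [risingFactorial]
  rw [hcast]
  push_cast
  linear_combination (-(risingFactorial α j * risingFactorial β (n - (j + 1)) *
    ((j : ℝ) + α) * (β + ((n : ℝ) - j - 1)) *
    (risingFactorial (α + β) n)⁻¹ * ((n : ℝ))⁻¹ * (((n : ℝ) - 1 + α + β))⁻¹)) * hc

lemma voter_db (α β : ℝ) (hα : 0 < α) (hβ : 0 < β) (n : ℕ) (hn : 1 ≤ n) :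
    ∀ j ≤ n, ∀ k ≤ n,
      betaBinomialWeight n α β j * voterKernel n α β j k
        = betaBinomialWeight n α β k * voterKernel n α β k j := by
  intro j hj k hk
  by_cases h1 : k = j + 1
  · subst h1
    unfold voterKernel
    rw [if_pos rfl, if_neg (by omega), if_pos rfl]
    exact db_core α β hα hβ n hn j hk
  · by_cases h2 : j = k + 1
    · subst h2
      unfold voterKernel
      rw [if_pos rfl, if_neg (by omega), if_pos rfl]
      exact (db_core α β hα hβ n hn k hj).symm
    · by_cases h3 : k = j
      · subst h3; rfl
      · unfold voterKernel
        rw [if_neg h1, if_neg h2, if_neg h3,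
          if_neg h2, if_neg h1, if_neg (fun h => h3 h.symm)]
        ring

lemma voter_rowsum (α β : ℝ) (n : ℕ) (hn : 1 ≤ n) :
    ∀ k ≤ n, ∑ j ∈ Finset.range (n + 1), voterKernel n α β k j = 1 := by
  intro k hk
  rcases Nat.eq_zero_or_pos k with rfl | hkpos
  · have key : ∀ j, voterKernel n α β 0 j =
        (if j = 1 then (((n : ℝ) - 0) / n) * ((0 + α) / ((n : ℝ) - 1 + α + β)) else 0)
        + (if j = 0 then
            1 - (((n : ℝ) - 0) / n) * ((0 + α) / ((n : ℝ) - 1 + α + β))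
              - ((0 : ℝ) / n) * (((n : ℝ) - 0 + β) / ((n : ℝ) - 1 + α + β)) else 0) := by
      intro j
      unfold voterKernel
      split_ifs <;> first | omega | exact ‹False›.elim | (push_cast; ring)
    rw [Finset.sum_congr rfl (fun j _ => key j), Finset.sum_add_distrib,
      Finset.sum_ite_eq' (Finset.range (n + 1)) 1,
      Finset.sum_ite_eq' (Finset.range (n + 1)) 0]
    have h1 : (1 : ℕ) ∈ Finset.range (n + 1) := by simp; omega
    have h0 : (0 : ℕ) ∈ Finset.range (n + 1) := by simp
    rw [if_pos h1, if_pos h0]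
    ring
  · obtain ⟨m, rfl⟩ : ∃ m, k = m + 1 := ⟨k - 1, by omega⟩
    have key : ∀ j, voterKernel n α β (m + 1) j =
        (if j = m + 2 then
          (((n : ℝ) - ((m : ℝ) + 1)) / n) * (((m : ℝ) + 1 + α) / ((n : ℝ) - 1 + α + β)) else 0)
        + (if j = m then
          (((m : ℝ) + 1) / n) * (((n : ℝ) - ((m : ℝ) + 1) + β) / ((n : ℝ) - 1 + α + β)) else 0)
        + (if j = m + 1 then
            1 - (((n : ℝ) - ((m : ℝ) + 1)) / n) * (((m : ℝ) + 1 + α) / ((n : ℝ) - 1 + α + β))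
              - (((m : ℝ) + 1) / n) * (((n : ℝ) - ((m : ℝ) + 1) + β) / ((n : ℝ) - 1 + α + β))
          else 0) := by
      intro j
      unfold voterKernel
      split_ifs <;> first | omega | exact ‹False›.elim | (push_cast; ring)
    rw [Finset.sum_congr rfl (fun j _ => key j), Finset.sum_add_distrib,
      Finset.sum_add_distrib,
      Finset.sum_ite_eq' (Finset.range (n + 1)) (m + 2),
      Finset.sum_ite_eq' (Finset.range (n + 1)) m,
      Finset.sum_ite_eq' (Finset.range (n + 1)) (m + 1)]
    have hm : m ∈ Finset.range (n + 1) := by simp; omega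
    have hm1 : (m + 1) ∈ Finset.range (n + 1) := by simp; omega
    rw [if_pos hm, if_pos hm1]
    by_cases hlt : m + 1 < n
    · rw [if_pos (by simp; omega)]
      ring
    · rw [if_neg (by simp; omega)]
      have hne : ((m : ℝ) + 1) = (n : ℝ) := by
        have : m + 1 = n := by omega
        exact_mod_cast congrArg (Nat.cast : ℕ → ℝ) this
      rw [← hne]
      ring


/-- The Beta-Binomial(n; α, β) distribution is stationary for the copy-step kernel:
`πQ = π`. -/
theorem betaBinomial_stationary (α β : ℝ) (hα : 0 < α) (hβ : 0 < β)
    (n : ℕ) (hn : 1 ≤ n) :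
    ∀ k ≤ n,
      ∑ j ∈ Finset.range (n + 1), betaBinomialWeight n α β j * voterKernel n α β j k
        = betaBinomialWeight n α β k := by
  intro k hk
  rw [Finset.sum_congr rfl (fun j hj =>
    voter_db α β hα hβ n hn j (Nat.lt_succ_iff.mp (Finset.mem_range.mp hj)) k hk),
    ← Finset.mul_sum, voter_rowsum α β n hn k hk, mul_one]
end

section
/- Let V ~ Beta(α, β) with α > β > 0. Then P(V ≥ 1/2) > E[V] = α/(α+β). Equivalently, 1 - I_{1/2}(α,β) > α/(α+β), where I_x(α,β) is the regularized incomplete beta function. -/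
open Real

/-- The Beta function `B(α,β) = Γ(α)Γ(β)/Γ(α+β)`. -/
noncomputable def betaFn (α β : ℝ) : ℝ := Gamma α * Gamma β / Gamma (α + β)

open MeasureTheory intervalIntegral in
lemma beta_aux_integrable {s t : ℝ} (hs : -1 < s) (ht : -1 < t) :
    IntervalIntegrable (fun u : ℝ => u ^ s * (1 - u) ^ t) volume 0 1 := by
  have hc1 : ContinuousOn (fun u : ℝ => (1 - u) ^ t) (Set.uIcc (0:ℝ) (1/2)) := by
    apply ContinuousOn.rpow_const (by fun_prop)
    intro x hx
    rw [Set.uIcc_of_le (by norm_num)] at hx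
    exact Or.inl (by intro h; have := hx.2; linarith)
  have hc2 : ContinuousOn (fun u : ℝ => u ^ s) (Set.uIcc (1/2:ℝ) 1) := by
    apply ContinuousOn.rpow_const continuousOn_id
    intro x hx
    rw [Set.uIcc_of_le (by norm_num)] at hx
    exact Or.inl (by intro h; simp at h; linarith [hx.1])
  have h1 : IntervalIntegrable (fun u : ℝ => u ^ s * (1 - u) ^ t) volume 0 (1/2) :=
    (intervalIntegrable_rpow' hs).mul_continuousOn hc1
  have hbase : IntervalIntegrable (fun u : ℝ => (1 - u) ^ t) volume (1/2) 1 := by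
    have h := (intervalIntegrable_rpow' ht (a := 0) (b := 1/2)).comp_sub_left 1
    norm_num at h
    exact h.symm
  exact h1.trans (hbase.continuousOn_mul hc2)

lemma real_betaIntegral {a b : ℝ} (ha : 0 < a) (hb : 0 < b) :
    (∫ u in (0:ℝ)..1, u ^ (a - 1) * (1 - u) ^ (b - 1)) = betaFn a b := by
  have key := Complex.Gamma_mul_Gamma_eq_betaIntegral (s := (a:ℂ)) (t := (b:ℂ))
    (by simpa using ha) (by simpa using hb)
  have hint : Complex.betaIntegral a b
      = ((∫ u in (0:ℝ)..1, u ^ (a - 1) * (1 - u) ^ (b - 1) : ℝ) : ℂ) := by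
    rw [Complex.betaIntegral, ← intervalIntegral.integral_ofReal]
    apply intervalIntegral.integral_congr
    intro x hx
    rw [Set.uIcc_of_le (by norm_num : (0:ℝ) ≤ 1)] at hx
    push_cast
    rw [Complex.ofReal_cpow hx.1, Complex.ofReal_cpow (by linarith [hx.2] : (0:ℝ) ≤ 1 - x)]
    push_cast
    ring
  rw [hint, ← Complex.ofReal_add, Complex.Gamma_ofReal, Complex.Gamma_ofReal,
    Complex.Gamma_ofReal, ← Complex.ofReal_mul, ← Complex.ofReal_mul] at key
  have hR : Gamma a * Gamma b
      = Gamma (a + b) * ∫ u in (0:ℝ)..1, u ^ (a - 1) * (1 - u) ^ (b - 1) :=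
    mod_cast key
  have hG : Gamma (a + b) ≠ 0 := (Real.Gamma_pos_of_pos (by linarith)).ne'
  rw [betaFn, hR]
  field_simp

/-- If `V ~ Beta(α,β)` with `α > β > 0`, then `P(V ≥ 1/2) > E[V] = α/(α+β)`;
equivalently `1 - I_{1/2}(α,β) > α/(α+β)`. -/
theorem beta_tail_gt_mean (α β : ℝ) (hβ : 0 < β) (hαβ : β < α) :
    (∫ u in (1/2 : ℝ)..1, u ^ (α - 1) * (1 - u) ^ (β - 1) / betaFn α β)
      > α / (α + β)
    ∧ 1 - (∫ u in (0 : ℝ)..(1/2), u ^ (α - 1) * (1 - u) ^ (β - 1)) / betaFn α β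
      > α / (α + β) := by
  have hα : 0 < α := hβ.trans hαβ
  have hB : 0 < betaFn α β :=
    div_pos (mul_pos (Real.Gamma_pos_of_pos hα) (Real.Gamma_pos_of_pos hβ))
      (Real.Gamma_pos_of_pos (by linarith))
  -- subset facts
  have hsub1 : Set.uIcc (0:ℝ) (1/2) ⊆ Set.uIcc (0:ℝ) 1 := by
    rw [Set.uIcc_of_le (by norm_num), Set.uIcc_of_le (by norm_num)]
    exact Set.Icc_subset_Icc le_rfl (by norm_num)
  have hsub2 : Set.uIcc (1/2:ℝ) 1 ⊆ Set.uIcc (0:ℝ) 1 := by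
    rw [Set.uIcc_of_le (by norm_num), Set.uIcc_of_le (by norm_num)]
    exact Set.Icc_subset_Icc (by norm_num) le_rfl
  -- integrability
  have hf01 := beta_aux_integrable (s := α - 1) (t := β - 1) (by linarith) (by linarith)
  have hg01 := beta_aux_integrable (s := α) (t := β - 1) (by linarith) (by linarith)
  have hh01 := beta_aux_integrable (s := β) (t := α - 1) (by linarith) (by linarith)
  have hf_hi := hf01.mono_set hsub2
  have hg_lo := hg01.mono_set hsub1
  have hg_hi := hg01.mono_set hsub2
  have hh_lo := hh01.mono_set hsub1
  -- the mean identity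
  have hmean : (∫ u in (0:ℝ)..1, u ^ α * (1 - u) ^ (β - 1)) = betaFn (α + 1) β := by
    have h := real_betaIntegral (a := α + 1) (b := β) (by linarith) hβ
    simpa using h
  have hratio : betaFn (α + 1) β = α / (α + β) * betaFn α β := by
    unfold betaFn
    rw [Real.Gamma_add_one hα.ne', show α + 1 + β = (α + β) + 1 by ring,
      Real.Gamma_add_one (by positivity : (α + β) ≠ 0)]
    have h1 : Gamma (α + β) ≠ 0 := (Real.Gamma_pos_of_pos (by linarith)).ne'
    field_simp
  -- split the mean integral
  have hsplit : (∫ u in (0:ℝ)..(1/2), u ^ α * (1 - u) ^ (β - 1))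
      + (∫ u in (1/2:ℝ)..1, u ^ α * (1 - u) ^ (β - 1))
      = ∫ u in (0:ℝ)..1, u ^ α * (1 - u) ^ (β - 1) :=
    intervalIntegral.integral_add_adjacent_intervals hg_lo hg_hi
  -- f - g on [1/2,1]
  have h13 : (∫ u in (1/2:ℝ)..1, u ^ (α - 1) * (1 - u) ^ (β - 1))
      - (∫ u in (1/2:ℝ)..1, u ^ α * (1 - u) ^ (β - 1))
      = ∫ u in (1/2:ℝ)..1, u ^ (α - 1) * (1 - u) ^ β := by
    rw [← intervalIntegral.integral_sub hf_hi hg_hi]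
    apply intervalIntegral.integral_congr
    intro x hx
    rw [Set.uIcc_of_le (by norm_num)] at hx
    rcases eq_or_lt_of_le hx.2 with h1 | h1
    · simp [h1, Real.zero_rpow hβ.ne']
    · have h1x : (0:ℝ) < 1 - x := by linarith
      have hx0 : (0:ℝ) < x := by linarith [hx.1]
      have e1 : x ^ α = x ^ (α - 1) * x := by
        rw [← Real.rpow_add_one hx0.ne' (α - 1)]; norm_num
      have e2 : (1 - x) ^ β = (1 - x) ^ (β - 1) * (1 - x) := by
        rw [← Real.rpow_add_one h1x.ne' (β - 1)]; norm_num
      simp only [e1, e2]; ring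
  -- reflection
  have hrefl : (∫ x in (0:ℝ)..(1/2), x ^ β * (1 - x) ^ (α - 1))
      = ∫ u in (1/2:ℝ)..1, u ^ (α - 1) * (1 - u) ^ β := by
    have h := intervalIntegral.integral_comp_sub_left (a := 0) (b := 1/2)
      (fun u : ℝ => u ^ (α - 1) * (1 - u) ^ β) 1
    norm_num at h
    rw [← h]
    apply intervalIntegral.integral_congr
    intro x _
    simp only [sub_sub_cancel]
    ring
  -- strict positivity
  have hpos : 0 < ∫ x in (0:ℝ)..(1/2),
      (x ^ β * (1 - x) ^ (α - 1) - x ^ α * (1 - x) ^ (β - 1)) := by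
    apply intervalIntegral.intervalIntegral_pos_of_pos_on (hh_lo.sub hg_lo) _ (by norm_num)
    intro x hx
    have hx0 : (0:ℝ) < x := hx.1
    have hx1 : x < 1 - x := by linarith [hx.2]
    have h1x : (0:ℝ) < 1 - x := by linarith
    have e1 : x ^ α = x ^ β * x ^ (α - β) := by
      rw [← Real.rpow_add hx0]; ring_nf
    have e2 : (1 - x) ^ (α - 1) = (1 - x) ^ (β - 1) * (1 - x) ^ (α - β) := by
      rw [← Real.rpow_add h1x]; ring_nf
    rw [e1, e2]
    have h3 : x ^ (α - β) < (1 - x) ^ (α - β) :=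
      Real.rpow_lt_rpow hx0.le hx1 (by linarith)
    have p1 : 0 < x ^ β := Real.rpow_pos_of_pos hx0 _
    have p2 : 0 < (1 - x) ^ (β - 1) := Real.rpow_pos_of_pos h1x _
    nlinarith [mul_pos p1 p2]
  have hpos' : 0 < (∫ x in (0:ℝ)..(1/2), x ^ β * (1 - x) ^ (α - 1))
      - ∫ x in (0:ℝ)..(1/2), x ^ α * (1 - x) ^ (β - 1) := by
    rwa [← intervalIntegral.integral_sub hh_lo hg_lo]
  -- main inequality for the tail integral
  have hmain : α / (α + β) * betaFn α β
      < ∫ u in (1/2:ℝ)..1, u ^ (α - 1) * (1 - u) ^ (β - 1) := by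
    rw [← hratio, ← hmean, ← hsplit]
    linarith [h13, hrefl, hpos']
  have hI1 : (∫ u in (1/2:ℝ)..1, u ^ (α - 1) * (1 - u) ^ (β - 1) / betaFn α β)
      = (∫ u in (1/2:ℝ)..1, u ^ (α - 1) * (1 - u) ^ (β - 1)) / betaFn α β := by
    simp [intervalIntegral.integral_div]
  constructor
  · rw [hI1, gt_iff_lt, lt_div_iff₀ hB]
    exact hmain
  · have htotal : (∫ u in (0:ℝ)..(1/2), u ^ (α - 1) * (1 - u) ^ (β - 1))
        + (∫ u in (1/2:ℝ)..1, u ^ (α - 1) * (1 - u) ^ (β - 1)) = betaFn α β := by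
      rw [intervalIntegral.integral_add_adjacent_intervals (hf01.mono_set hsub1) hf_hi]
      exact real_betaIntegral hα hβ
    have hJ : (∫ u in (0:ℝ)..(1/2), u ^ (α - 1) * (1 - u) ^ (β - 1))
        = betaFn α β - ∫ u in (1/2:ℝ)..1, u ^ (α - 1) * (1 - u) ^ (β - 1) := by
      linarith [htotal]
    rw [hJ]
    have he : 1 - (betaFn α β - (∫ u in (1/2:ℝ)..1, u ^ (α - 1) * (1 - u) ^ (β - 1)))
          / betaFn α β
        = (∫ u in (1/2:ℝ)..1, u ^ (α - 1) * (1 - u) ^ (β - 1)) / betaFn α β := by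
      field_simp
      ring
    rw [he, gt_iff_lt, lt_div_iff₀ hB]
    exact hmain
end

section
/- For α > β > 0, the regularized incomplete beta function satisfies I_{1/2}(α, β) < β/(α+β). -/
open Real
open intervalIntegral

lemma ibeta_integrable {a b : ℝ} (ha : 0 < a) (hb : 0 < b) :
    IntervalIntegrable (fun t : ℝ => t ^ (a-1) * (1-t) ^ (b-1)) MeasureTheory.volume 0 1 := by
  have hleft : IntervalIntegrable (fun t : ℝ => t ^ (a-1) * (1-t) ^ (b-1))
      MeasureTheory.volume 0 (1/2) := by
    refine (intervalIntegrable_rpow' (by linarith) (a := 0) (b := 1/2)).mul_continuousOn ?_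
    refine ContinuousOn.rpow_const (by fun_prop) ?_
    intro x hx
    rw [Set.uIcc_of_le (by norm_num)] at hx
    left; intro h; have := hx.2; nlinarith [hx.1, hx.2]
  have hright : IntervalIntegrable (fun t : ℝ => t ^ (a-1) * (1-t) ^ (b-1))
      MeasureTheory.volume (1/2) 1 := by
    have h1 : IntervalIntegrable (fun t : ℝ => (1-t) ^ (b-1)) MeasureTheory.volume (1/2) 1 := by
      have := ((intervalIntegrable_rpow' (r := b-1) (by linarith) (a := 0) (b := 1/2)).comp_sub_left 1).symm
      norm_num at this
      convert this using 2 <;> norm_num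
    refine h1.continuousOn_mul ?_
    refine ContinuousOn.rpow_const (by fun_prop) ?_
    intro x hx
    rw [Set.uIcc_of_le (by norm_num)] at hx
    left; intro h; rw [h] at hx; linarith [hx.1]
  exact hleft.trans hright

lemma real_beta {a b : ℝ} (ha : 0 < a) (hb : 0 < b) :
    ∫ t in (0:ℝ)..1, t ^ (a-1) * (1-t) ^ (b-1) = Gamma a * Gamma b / Gamma (a+b) := by
  have key := Complex.Gamma_mul_Gamma_eq_betaIntegral (s := (a:ℂ)) (t := (b:ℂ))
    (by simpa using ha) (by simpa using hb)
  have hcast : Complex.betaIntegral (a:ℂ) (b:ℂ)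
      = ((∫ t in (0:ℝ)..1, t ^ (a-1) * (1-t) ^ (b-1) : ℝ) : ℂ) := by
    rw [Complex.betaIntegral, ← intervalIntegral.integral_ofReal]
    refine intervalIntegral.integral_congr ?_
    intro x hx
    rw [Set.uIcc_of_le (by norm_num)] at hx
    dsimp only
    rw [Complex.ofReal_mul, Complex.ofReal_cpow hx.1, Complex.ofReal_cpow (by linarith [hx.2] : (0:ℝ) ≤ 1 - x)]
    push_cast
    ring
  rw [hcast, ← Complex.ofReal_add, Complex.Gamma_ofReal, Complex.Gamma_ofReal,
    Complex.Gamma_ofReal, ← Complex.ofReal_mul, ← Complex.ofReal_mul] at key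
  have := Complex.ofReal_injective key
  have hG : Gamma (a+b) ≠ 0 := (Gamma_pos_of_pos (by linarith)).ne'
  field_simp
  linarith [this]


/-- The regularized incomplete beta function
`I_x(α,β) = (1/B(α,β))·∫_0^x t^{α-1}(1-t)^{β-1} dt`. -/
noncomputable def regIncBeta (x α β : ℝ) : ℝ :=
  (∫ t in (0 : ℝ)..x, t ^ (α - 1) * (1 - t) ^ (β - 1)) / betaFn α β

/-- For `α > β > 0`, `I_{1/2}(α,β) < β/(α+β)`. -/
theorem regIncBeta_half_lt (α β : ℝ) (hβ : 0 < β) (hαβ : β < α) :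
    regIncBeta (1/2) α β < β / (α + β) := by
  have hα : 0 < α := hβ.trans hαβ
  have hαβ0 : 0 < α + β := by linarith
  have hB : 0 < betaFn α β :=
    div_pos (mul_pos (Gamma_pos_of_pos hα) (Gamma_pos_of_pos hβ)) (Gamma_pos_of_pos hαβ0)
  rw [regIncBeta, div_lt_iff₀ hB]
  -- the target value as a full beta integral
  have h1 := real_beta (a := α) (b := β + 1) hα (by linarith)
  simp only [add_sub_cancel_right] at h1
  have hkey : β / (α+β) * betaFn α β = ∫ t in (0:ℝ)..1, t ^ (α-1) * (1-t) ^ β := by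
    rw [h1, betaFn, Gamma_add_one hβ.ne', show α + (β + 1) = (α + β) + 1 by ring,
      Gamma_add_one hαβ0.ne']
    have g1 := (Gamma_pos_of_pos hαβ0).ne'
    field_simp
  rw [hkey]
  -- integrability on subintervals
  have hint : IntervalIntegrable (fun t : ℝ => t ^ (α-1) * (1-t) ^ β)
      MeasureTheory.volume 0 1 := by
    have := ibeta_integrable (a := α) (b := β + 1) hα (by linarith)
    simpa using this
  have hsub1 : Set.uIcc (0:ℝ) (1/2) ⊆ Set.uIcc (0:ℝ) 1 := by
    rw [Set.uIcc_of_le (by norm_num : (0:ℝ) ≤ 1/2), Set.uIcc_of_le (by norm_num : (0:ℝ) ≤ 1)]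
    intro x hx; exact ⟨hx.1, by linarith [hx.2]⟩
  have hsub2 : Set.uIcc (1/2:ℝ) 1 ⊆ Set.uIcc (0:ℝ) 1 := by
    rw [Set.uIcc_of_le (by norm_num : (1/2:ℝ) ≤ 1), Set.uIcc_of_le (by norm_num : (0:ℝ) ≤ 1)]
    intro x hx; exact ⟨by linarith [hx.1], hx.2⟩
  have hint1 := hint.mono_set hsub1
  have hint2 := hint.mono_set hsub2
  rw [← intervalIntegral.integral_add_adjacent_intervals hint1 hint2]
  -- reflection of the right piece
  have hrefl : (∫ t in (1/2:ℝ)..1, t ^ (α-1) * (1-t) ^ β)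
      = ∫ t in (0:ℝ)..(1/2), t ^ β * (1-t) ^ (α-1) := by
    have h := intervalIntegral.integral_comp_sub_left (a := 0) (b := 1/2)
      (fun x : ℝ => x ^ (α-1) * (1-x) ^ β) 1
    norm_num at h
    rw [← h]
    exact intervalIntegral.integral_congr fun x hx => by ring
  rw [hrefl]
  -- decompose the left piece
  have hcontC : ContinuousOn (fun x : ℝ => x ^ α * (1-x) ^ (β-1)) (Set.Icc 0 (1/2)) := by
    refine ContinuousOn.mul (continuousOn_id.rpow_const fun x _ => Or.inr hα.le) ?_
    refine ContinuousOn.rpow_const (by fun_prop) fun x hx => Or.inl ?_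
    intro h; have := hx.2; nlinarith [hx.2]
  have hcontD : ContinuousOn (fun x : ℝ => x ^ β * (1-x) ^ (α-1)) (Set.Icc 0 (1/2)) := by
    refine ContinuousOn.mul (continuousOn_id.rpow_const fun x _ => Or.inr hβ.le) ?_
    refine ContinuousOn.rpow_const (by fun_prop) fun x hx => Or.inl ?_
    intro h; have := hx.2; nlinarith [hx.2]
  have hintC : IntervalIntegrable (fun x : ℝ => x ^ α * (1-x) ^ (β-1))
      MeasureTheory.volume 0 (1/2) := by
    apply hcontC.intervalIntegrable_of_Icc (by norm_num)
  have hdecomp : (∫ t in (0:ℝ)..(1/2), t ^ (α-1) * (1-t) ^ (β-1))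
      = (∫ t in (0:ℝ)..(1/2), t ^ (α-1) * (1-t) ^ β)
        + ∫ t in (0:ℝ)..(1/2), t ^ α * (1-t) ^ (β-1) := by
    rw [← intervalIntegral.integral_add hint1 hintC]
    refine intervalIntegral.integral_congr fun x hx => ?_
    rw [Set.uIcc_of_le (by norm_num : (0:ℝ) ≤ 1/2)] at hx
    rcases eq_or_lt_of_le hx.1 with h0 | h0
    · rw [← h0]
      simp [Real.zero_rpow hα.ne', Real.one_rpow]
    · have h1x : (0:ℝ) < 1 - x := by linarith [hx.2]
      have e1 : x ^ α = x ^ (α-1) * x := by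
        rw [← Real.rpow_add_one h0.ne']; ring_nf
      have e2 : (1-x) ^ β = (1-x) ^ (β-1) * (1-x) := by
        rw [← Real.rpow_add_one h1x.ne']; ring_nf
      rw [e1, e2]; ring
  rw [hdecomp]
  apply (add_lt_add_iff_left _).2
  -- strict inequality between the two "tail" pieces
  refine intervalIntegral.integral_lt_integral_of_continuousOn_of_le_of_exists_lt
    (by norm_num) hcontC hcontD ?_ ?_
  · intro x hx
    have hx0 : 0 < x := hx.1
    have h1x : 0 < 1 - x := by have := hx.2; linarith
    have e1 : x ^ α = x ^ β * x ^ (α-β) := by rw [← Real.rpow_add hx0]; ring_nf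
    have e2 : (1-x) ^ (α-1) = (1-x) ^ (β-1) * (1-x) ^ (α-β) := by
      rw [← Real.rpow_add h1x]; ring_nf
    rw [e1, e2]
    have key : x ^ (α-β) ≤ (1-x) ^ (α-β) :=
      Real.rpow_le_rpow hx0.le (by have := hx.2; linarith) (by linarith)
    have pβ : (0:ℝ) ≤ x ^ β := (Real.rpow_pos_of_pos hx0 β).le
    have pb : (0:ℝ) ≤ (1-x) ^ (β-1) := (Real.rpow_pos_of_pos h1x (β-1)).le
    nlinarith [mul_le_mul_of_nonneg_left key (mul_nonneg pβ pb)]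
  · refine ⟨1/4, by norm_num, ?_⟩
    have e1 : (1/4:ℝ) ^ α = (1/4:ℝ) ^ β * (1/4:ℝ) ^ (α-β) := by
      rw [← Real.rpow_add (by norm_num)]; ring_nf
    have e2 : (1 - 1/4:ℝ) ^ (α-1) = (1 - 1/4:ℝ) ^ (β-1) * (1 - 1/4:ℝ) ^ (α-β) := by
      rw [← Real.rpow_add (by norm_num)]; ring_nf
    rw [e1, e2]
    have key : (1/4:ℝ) ^ (α-β) < (1 - 1/4:ℝ) ^ (α-β) :=
      Real.rpow_lt_rpow (by norm_num) (by norm_num) (by linarith)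
    have pβ : (0:ℝ) < (1/4:ℝ) ^ β := Real.rpow_pos_of_pos (by norm_num) β
    have pb : (0:ℝ) < (1 - 1/4:ℝ) ^ (β-1) := Real.rpow_pos_of_pos (by norm_num) (β-1)
    nlinarith [mul_lt_mul_of_pos_left key (mul_pos pβ pb)]
end

section
/- Let α, β > 0 with α > β, and for each n let X_n ~ Beta-Binomial(n; α, β). Then lim_{n→∞} P(X_n ≥ ⌊n/2⌋ + 1) = 1 - I_{1/2}(α, β) > α/(α+β). -/
open Real Filter MeasureTheory intervalIntegral Set

lemma risingFactorial_eq (a : ℝ) (ha : 0 < a) (m : ℕ) :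
    risingFactorial a m = Gamma (a + m) / Gamma a := by
  induction m with
  | zero => simp [risingFactorial, div_self (Real.Gamma_pos_of_pos ha).ne']
  | succ m ih =>
    have h1 : a + (m+1 : ℕ) = (a + m) + 1 := by push_cast; ring
    rw [risingFactorial, ih, h1, Real.Gamma_add_one (by positivity)]
    field_simp

lemma densContinuousOn {a b : ℝ} :
    ContinuousOn (fun t : ℝ => t ^ (a-1) * (1-t) ^ (b-1)) (Ioo 0 1) := by
  intro x hx
  obtain ⟨hx0, hx1⟩ := hx
  have h1 : ContinuousAt (fun t : ℝ => t ^ (a-1)) x :=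
    Real.continuousAt_rpow_const x (a-1) (Or.inl hx0.ne')
  have h2 : ContinuousAt (fun t : ℝ => (1-t) ^ (b-1)) x := by
    have hc := Real.continuousAt_rpow_const (1-x) (b-1)
      (Or.inl (by linarith : (0:ℝ) < 1 - x).ne')
    exact ContinuousAt.comp hc ((continuous_const.sub continuous_id).continuousAt)
  exact (h1.mul h2).continuousWithinAt

lemma eqOn_beta {a b : ℝ} :
    ∀ x ∈ Ioo (0:ℝ) 1, ((x:ℂ) ^ ((a:ℂ)-1) * (1-(x:ℂ)) ^ ((b:ℂ)-1))
      = (((x ^ (a-1) * (1-x) ^ (b-1) : ℝ)) : ℂ) := by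
  intro x hx
  have h1 : ((1:ℂ) - x) = ((1 - x : ℝ) : ℂ) := by push_cast; ring
  have h2 : ((a:ℂ) - 1) = ((a - 1 : ℝ) : ℂ) := by push_cast; ring
  have h3 : ((b:ℂ) - 1) = ((b - 1 : ℝ) : ℂ) := by push_cast; ring
  rw [h1, h2, h3, ← Complex.ofReal_cpow hx.1.le, ← Complex.ofReal_cpow (by linarith [hx.2] : (0:ℝ) ≤ 1 - x)]
  push_cast; ring

lemma betaIntegrable {a b : ℝ} (ha : 0 < a) (hb : 0 < b) :
    IntervalIntegrable (fun t : ℝ => t ^ (a-1) * (1-t) ^ (b-1)) volume 0 1 := by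
  have hc := Complex.betaIntegral_convergent (u := a) (v := b) (by simpa) (by simpa)
  rw [intervalIntegrable_iff_integrableOn_Ioc_of_le (by norm_num)] at hc ⊢
  refine hc.norm.mono' ?_ ?_
  · rw [← Measure.restrict_congr_set Ioo_ae_eq_Ioc]
    exact densContinuousOn.aestronglyMeasurable measurableSet_Ioo
  · rw [Measure.restrict_congr_set Ioo_ae_eq_Ioc.symm]
    filter_upwards [ae_restrict_mem measurableSet_Ioo] with x hx
    rw [← Complex.norm_real, ← eqOn_beta x hx]

lemma betaIntegral_eq {a b : ℝ} (ha : 0 < a) (hb : 0 < b) :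
    ∫ t in (0:ℝ)..1, t ^ (a-1) * (1-t) ^ (b-1) = betaFn a b := by
  have hg := Complex.Gamma_mul_Gamma_eq_betaIntegral (s := a) (t := b) (by simpa) (by simpa)
  have hne : Complex.Gamma ((a:ℂ) + b) ≠ 0 := by
    apply Complex.Gamma_ne_zero_of_re_pos
    simp only [Complex.add_re, Complex.ofReal_re]; linarith
  have hβ : Complex.betaIntegral a b =
      ((∫ t in (0:ℝ)..1, t ^ (a-1) * (1-t) ^ (b-1) : ℝ) : ℂ) := by
    rw [Complex.betaIntegral, intervalIntegral.integral_of_le (by norm_num),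
      intervalIntegral.integral_of_le (by norm_num : (0:ℝ) ≤ 1),
      MeasureTheory.integral_Ioc_eq_integral_Ioo, MeasureTheory.integral_Ioc_eq_integral_Ioo,
      setIntegral_congr_fun measurableSet_Ioo eqOn_beta]
    exact _root_.integral_ofReal (𝕜 := ℂ)
  rw [hβ] at hg
  have h2 : ((betaFn a b : ℝ) : ℂ) = ((∫ t in (0:ℝ)..1, t ^ (a-1) * (1-t) ^ (b-1) : ℝ) : ℂ) := by
    rw [betaFn]
    push_cast [← Complex.Gamma_ofReal]
    rw [div_eq_iff hne]
    linear_combination hg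
  exact_mod_cast h2.symm

lemma betaFn_pos {a b : ℝ} (ha : 0 < a) (hb : 0 < b) : 0 < betaFn a b := by
  unfold betaFn
  have := Real.Gamma_pos_of_pos ha
  have := Real.Gamma_pos_of_pos hb
  have := Real.Gamma_pos_of_pos (by linarith : 0 < a + b)
  positivity

lemma weight_eq (n : ℕ) (α β : ℝ) (hα : 0 < α) (hβ : 0 < β) (k : ℕ) (hk : k ≤ n) :
    betaBinomialWeight n α β k
      = (n.choose k : ℝ) * betaFn (α + k) (β + (n - k : ℕ)) / betaFn α β := by
  have hΓ : ∀ x : ℝ, 0 < x → Gamma x ≠ 0 := fun x hx => (Real.Gamma_pos_of_pos hx).ne'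
  rw [betaBinomialWeight, risingFactorial_eq α hα, risingFactorial_eq β hβ,
    risingFactorial_eq (α+β) (by linarith), betaFn, betaFn]
  have h1 : α + (k:ℝ) + (β + ((n-k:ℕ):ℝ)) = α + β + n := by
    have : ((n-k:ℕ):ℝ) = (n:ℝ) - k := by
      rw [Nat.cast_sub hk]
    rw [this]; ring
  rw [h1]
  have e1 := hΓ α hα
  have e2 := hΓ β hβ
  have e3 := hΓ (α+β) (by linarith)
  have e4 := hΓ (α+β+n) (by positivity)
  have e5 := hΓ (α+(k:ℕ)) (by positivity)
  have e6 := hΓ (β+((n-k:ℕ):ℝ)) (by positivity)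
  field_simp

lemma weight_integral (n : ℕ) (α β : ℝ) (hα : 0 < α) (hβ : 0 < β) (k : ℕ) (hk : k ≤ n) :
    betaBinomialWeight n α β k
      = (∫ t in (0:ℝ)..1, (n.choose k : ℝ) * (t^k * (1-t)^(n-k)) * (t ^ (α-1) * (1-t) ^ (β-1)))
        / betaFn α β := by
  rw [weight_eq n α β hα hβ k hk, ← betaIntegral_eq (by positivity : (0:ℝ) < α + k)
    (by positivity : (0:ℝ) < β + (n-k:ℕ))]
  congr 1
  rw [← intervalIntegral.integral_const_mul]
  rw [intervalIntegral.integral_of_le (by norm_num : (0:ℝ) ≤ 1),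
    intervalIntegral.integral_of_le (by norm_num : (0:ℝ) ≤ 1),
    MeasureTheory.integral_Ioc_eq_integral_Ioo, MeasureTheory.integral_Ioc_eq_integral_Ioo]
  apply setIntegral_congr_fun measurableSet_Ioo
  intro t ht
  obtain ⟨ht0, ht1⟩ := ht
  have h1t : (0:ℝ) < 1 - t := by linarith
  have e1 : t ^ (α + k - 1) = t ^ (α - 1) * t ^ k := by
    rw [← Real.rpow_natCast t k, ← Real.rpow_add ht0]; ring_nf
  have e2 : (1-t) ^ (β + (n-k:ℕ) - 1) = (1-t) ^ (β - 1) * (1-t) ^ (n-k) := by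
    rw [← Real.rpow_natCast (1-t) (n-k), ← Real.rpow_add h1t]; ring_nf
  simp only [e1, e2]; ring

lemma sum_weight_eq (n : ℕ) (α β : ℝ) (hα : 0 < α) (hβ : 0 < β) :
    ∑ k ∈ Finset.Icc (n / 2 + 1) n, betaBinomialWeight n α β k
      = (∫ t in (0:ℝ)..1,
          (∑ k ∈ Finset.Icc (n / 2 + 1) n, (n.choose k : ℝ) * (t^k * (1-t)^(n-k)))
            * (t ^ (α-1) * (1-t) ^ (β-1))) / betaFn α β := by
  have hint : ∀ k ∈ Finset.Icc (n / 2 + 1) n, IntervalIntegrable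
      (fun t : ℝ => (n.choose k : ℝ) * (t^k * (1-t)^(n-k)) * (t ^ (α-1) * (1-t) ^ (β-1)))
      volume 0 1 := by
    intro k hk
    have h := ((betaIntegrable (by positivity : (0:ℝ) < α + k)
      (by positivity : (0:ℝ) < β + (n-k:ℕ))).const_mul (n.choose k : ℝ))
    rw [intervalIntegrable_iff_integrableOn_Ioc_of_le (by norm_num)] at h ⊢
    refine (h.congr_fun_ae ?_)
    rw [← Measure.restrict_congr_set Ioo_ae_eq_Ioc]
    filter_upwards [ae_restrict_mem measurableSet_Ioo] with t ht
    obtain ⟨ht0, ht1⟩ := ht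
    have h1t : (0:ℝ) < 1 - t := by linarith
    have e1 : t ^ (α + k - 1) = t ^ (α - 1) * t ^ k := by
      rw [← Real.rpow_natCast t k, ← Real.rpow_add ht0]; ring_nf
    have e2 : (1-t) ^ (β + (n-k:ℕ) - 1) = (1-t) ^ (β - 1) * (1-t) ^ (n-k) := by
      rw [← Real.rpow_natCast (1-t) (n-k), ← Real.rpow_add h1t]; ring_nf
    simp only [e1, e2]; ring
  rw [Finset.sum_congr rfl (fun k hk => weight_integral n α β hα hβ k (Finset.mem_Icc.mp hk).2)]
  rw [← Finset.sum_div]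
  congr 1
  rw [← intervalIntegral.integral_finset_sum hint]
  congr 1; ext t
  rw [Finset.sum_mul]

noncomputable def binomTail (n : ℕ) (t : ℝ) : ℝ :=
  ∑ k ∈ Finset.Icc (n / 2 + 1) n, (n.choose k : ℝ) * (t^k * (1-t)^(n-k))

lemma sum_all (n : ℕ) (t : ℝ) :
    ∑ k ∈ Finset.range (n+1), (n.choose k : ℝ) * (t^k * (1-t)^(n-k)) = 1 := by
  have h := add_pow t (1-t) n
  simp only [add_sub_cancel, one_pow] at h
  refine Eq.trans ?_ h.symm
  exact Finset.sum_congr rfl (fun k _ => by ring)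

lemma split_sum (n : ℕ) (f : ℕ → ℝ) :
    ∑ k ∈ Finset.range (n+1), f k
      = ∑ k ∈ Finset.range (n/2+1), f k + ∑ k ∈ Finset.Icc (n/2+1) n, f k := by
  rw [Finset.range_eq_Ico, ← Finset.Ico_add_one_right_eq_Icc, Finset.range_eq_Ico,
    Finset.sum_Ico_consecutive f (by omega : 0 ≤ n/2+1) (by omega : n/2+1 ≤ n+1)]

lemma term_nonneg (n k : ℕ) {t : ℝ} (h0 : 0 ≤ t) (h1 : t ≤ 1) :
    0 ≤ (n.choose k : ℝ) * (t^k * (1-t)^(n-k)) := by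
  have : (0:ℝ) ≤ 1 - t := by linarith
  positivity

lemma binomTail_nonneg (n : ℕ) {t : ℝ} (h0 : 0 ≤ t) (h1 : t ≤ 1) : 0 ≤ binomTail n t :=
  Finset.sum_nonneg fun k _ => term_nonneg n k h0 h1

lemma binomTail_le_one (n : ℕ) {t : ℝ} (h0 : 0 ≤ t) (h1 : t ≤ 1) : binomTail n t ≤ 1 := by
  have h := sum_all n t
  rw [split_sum n] at h
  have := Finset.sum_nonneg (fun k (_ : k ∈ Finset.range (n/2+1)) => term_nonneg n k h0 h1)
  unfold binomTail
  linarith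

lemma choose_sum_le (n : ℕ) (s : Finset ℕ) (hs : s ⊆ Finset.range (n+1)) :
    ∑ k ∈ s, (n.choose k : ℝ) ≤ 2^n := by
  have h1 : ∑ k ∈ s, (n.choose k : ℝ) ≤ ∑ k ∈ Finset.range (n+1), (n.choose k : ℝ) :=
    Finset.sum_le_sum_of_subset_of_nonneg hs (fun k _ _ => by positivity)
  have h2 : ∑ k ∈ Finset.range (n+1), (n.choose k : ℝ) = 2^n := by
    rw [← Nat.cast_sum]
    rw [Nat.sum_range_choose]
    push_cast; ring
  linarith

lemma tail_high_bound (n : ℕ) {t : ℝ} (h0 : 1/2 ≤ t) (h1 : t ≤ 1) :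
    1 - binomTail n t ≤ 2 * (4*(t*(1-t)))^(n/2) := by
  set m := n/2 with hm
  have ht0 : (0:ℝ) ≤ t := by linarith
  have ht1 : (0:ℝ) ≤ 1 - t := by linarith
  have hts : 1 - t ≤ t := by linarith
  have key : 1 - binomTail n t = ∑ k ∈ Finset.range (m+1), (n.choose k : ℝ) * (t^k * (1-t)^(n-k)) := by
    have h := sum_all n t
    rw [split_sum n] at h
    unfold binomTail
    linarith
  rw [key]
  have step1 : ∑ k ∈ Finset.range (m+1), (n.choose k : ℝ) * (t^k * (1-t)^(n-k))
      ≤ ∑ k ∈ Finset.range (m+1), (n.choose k : ℝ) * (t^m * (1-t)^(n-m)) := by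
    apply Finset.sum_le_sum
    intro k hk
    have hkm : k ≤ m := by simpa [Nat.lt_succ_iff] using hk
    have hmn : m ≤ n := by omega
    apply mul_le_mul_of_nonneg_left _ (by positivity : (0:ℝ) ≤ (n.choose k : ℝ))
    have e1 : (1-t)^(n-k) = (1-t)^(m-k) * (1-t)^(n-m) := by
      rw [← pow_add]; congr 1; omega
    have e2 : t^m = t^k * t^(m-k) := by
      rw [← pow_add]; congr 1; omega
    rw [e1, e2]
    have h3 : (1-t)^(m-k) ≤ t^(m-k) := pow_le_pow_left₀ ht1 hts _
    calc t^k * ((1-t)^(m-k) * (1-t)^(n-m)) ≤ t^k * (t^(m-k) * (1-t)^(n-m)) := by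
          apply mul_le_mul_of_nonneg_left _ (by positivity)
          exact mul_le_mul_of_nonneg_right h3 (by positivity)
      _ = t^k * t^(m-k) * (1-t)^(n-m) := by ring
  have step2 : ∑ k ∈ Finset.range (m+1), (n.choose k : ℝ) * (t^m * (1-t)^(n-m))
      ≤ 2^n * (t^m * (1-t)^(n-m)) := by
    rw [← Finset.sum_mul]
    apply mul_le_mul_of_nonneg_right _ (by positivity)
    exact choose_sum_le n _ (Finset.range_subset_range.mpr (by omega))
  have step3 : (2:ℝ)^n * (t^m * (1-t)^(n-m)) ≤ 2 * (4*(t*(1-t)))^m := by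
    have e1 : (1-t)^(n-m) ≤ (1-t)^m :=
      pow_le_pow_of_le_one ht1 (by linarith) (by omega)
    have e2 : (2:ℝ)^n ≤ 2 * 4^m := by
      have : (2:ℝ)^n ≤ 2^(2*m+1) := pow_le_pow_right₀ (by norm_num) (by omega)
      calc (2:ℝ)^n ≤ 2^(2*m+1) := this
        _ = 2 * 4^m := by rw [pow_succ, pow_mul]; norm_num; ring
    calc (2:ℝ)^n * (t^m * (1-t)^(n-m)) ≤ (2*4^m) * (t^m * (1-t)^m) := by
          apply mul_le_mul e2 _ (by positivity) (by positivity)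
          exact mul_le_mul_of_nonneg_left e1 (by positivity)
      _ = 2 * (4*(t*(1-t)))^m := by rw [mul_pow, mul_pow]; ring
  linarith

lemma tail_low_bound (n : ℕ) {t : ℝ} (h0 : 0 ≤ t) (h1 : t ≤ 1/2) :
    binomTail n t ≤ 4 * (4*(t*(1-t)))^(n - n/2 - 1) := by
  set m := n/2 with hm
  set j := n - n/2 - 1 with hj
  have ht1 : (0:ℝ) ≤ 1 - t := by linarith
  have hts : t ≤ 1 - t := by linarith
  unfold binomTail
  have step1 : ∑ k ∈ Finset.Icc (m+1) n, (n.choose k : ℝ) * (t^k * (1-t)^(n-k))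
      ≤ ∑ k ∈ Finset.Icc (m+1) n, (n.choose k : ℝ) * (t^j * (1-t)^j) := by
    apply Finset.sum_le_sum
    intro k hk
    rw [Finset.mem_Icc] at hk
    obtain ⟨hk1, hk2⟩ := hk
    apply mul_le_mul_of_nonneg_left _ (by positivity : (0:ℝ) ≤ (n.choose k : ℝ))
    have e2 : t^k = t^(m+1) * t^(k-m-1) := by rw [← pow_add]; congr 1; omega
    have h3 : t^(k-m-1) ≤ (1-t)^(k-m-1) := pow_le_pow_left₀ h0 hts _
    have e3 : (1-t)^(k-m-1) * (1-t)^(n-k) = (1-t)^(n-m-1) := by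
      rw [← pow_add]; congr 1; omega
    have h4 : t^(m+1) ≤ t^j := pow_le_pow_of_le_one h0 (by linarith) (by omega)
    have e4 : n - m - 1 = j := by omega
    calc t^k * (1-t)^(n-k) = t^(m+1) * (t^(k-m-1) * (1-t)^(n-k)) := by rw [e2]; ring
      _ ≤ t^(m+1) * ((1-t)^(k-m-1) * (1-t)^(n-k)) := by
          apply mul_le_mul_of_nonneg_left _ (by positivity)
          exact mul_le_mul_of_nonneg_right h3 (by positivity)
      _ = t^(m+1) * (1-t)^j := by rw [e3, e4]
      _ ≤ t^j * (1-t)^j := mul_le_mul_of_nonneg_right h4 (by positivity)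
  have step2 : ∑ k ∈ Finset.Icc (m+1) n, (n.choose k : ℝ) * (t^j * (1-t)^j)
      ≤ 2^n * (t^j * (1-t)^j) := by
    rw [← Finset.sum_mul]
    apply mul_le_mul_of_nonneg_right _ (by positivity)
    apply choose_sum_le n _
    intro k hk
    rw [Finset.mem_Icc] at hk
    simp only [Finset.mem_range]
    omega
  have step3 : (2:ℝ)^n * (t^j * (1-t)^j) ≤ 4 * (4*(t*(1-t)))^j := by
    have e2 : (2:ℝ)^n ≤ 4 * 4^j := by
      have h5 : (2:ℝ)^n ≤ 2^(2*j+2) := pow_le_pow_right₀ (by norm_num) (by omega)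
      calc (2:ℝ)^n ≤ 2^(2*j+2) := h5
        _ = 4 * 4^j := by rw [pow_add, pow_mul]; norm_num; ring
    calc (2:ℝ)^n * (t^j * (1-t)^j) ≤ (4*4^j) * (t^j * (1-t)^j) :=
          mul_le_mul_of_nonneg_right e2 (by positivity)
      _ = 4 * (4*(t*(1-t)))^j := by rw [mul_pow, mul_pow]; ring
  linarith

lemma c_lt_one {t : ℝ} (h : t ≠ 1/2) : 4*(t*(1-t)) < 1 := by
  have h2 : (2*t-1) ≠ 0 := fun hc => h (by linarith)
  have h3 : 0 < (2*t-1)^2 := by positivity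
  nlinarith [h3]

lemma tendsto_half : Tendsto (fun n : ℕ => n/2) atTop atTop := by
  apply Filter.tendsto_atTop_atTop.mpr
  intro b
  exact ⟨2*b, fun n hn => by omega⟩

lemma tendsto_j : Tendsto (fun n : ℕ => n - n/2 - 1) atTop atTop := by
  apply Filter.tendsto_atTop_atTop.mpr
  intro b
  exact ⟨2*b+2, fun n hn => by omega⟩

lemma tendsto_binomTail_one {t : ℝ} (h : 1/2 < t) (h1 : t < 1) :
    Tendsto (fun n => binomTail n t) atTop (nhds 1) := by
  have hc0 : (0:ℝ) ≤ 4*(t*(1-t)) := by nlinarith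
  have hc1 := c_lt_one (by linarith : t ≠ 1/2)
  have hpow : Tendsto (fun n : ℕ => (4*(t*(1-t)))^(n/2)) atTop (nhds 0) :=
    (tendsto_pow_atTop_nhds_zero_of_lt_one hc0 hc1).comp tendsto_half
  have hf : Tendsto (fun n => 1 - binomTail n t) atTop (nhds 0) := by
    apply squeeze_zero (fun n => by linarith [binomTail_le_one n (by linarith : (0:ℝ) ≤ t) h1.le])
      (fun n => tail_high_bound n h.le h1.le)
    simpa using hpow.const_mul 2
  have := tendsto_const_nhds (x := (1:ℝ)) (f := atTop (α := ℕ)) |>.sub hf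
  simpa using this

lemma tendsto_binomTail_zero {t : ℝ} (h0 : 0 < t) (h : t < 1/2) :
    Tendsto (fun n => binomTail n t) atTop (nhds 0) := by
  have hc0 : (0:ℝ) ≤ 4*(t*(1-t)) := by nlinarith
  have hc1 := c_lt_one (by linarith : t ≠ 1/2)
  have hpow : Tendsto (fun n : ℕ => (4*(t*(1-t)))^(n - n/2 - 1)) atTop (nhds 0) :=
    (tendsto_pow_atTop_nhds_zero_of_lt_one hc0 hc1).comp tendsto_j
  apply squeeze_zero (fun n => binomTail_nonneg n h0.le (by linarith))
    (fun n => tail_low_bound n h0.le h.le)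
  simpa using hpow.const_mul 4

section Ineq
variable {α β : ℝ} (hβ : 0 < β) (hαβ : β < α)
include hβ hαβ

private lemma hα : 0 < α := lt_trans hβ hαβ

-- integrability on subintervals
lemma int_dens_sub (u v : ℝ) (hu : 0 ≤ u) (hu1 : u ≤ 1) (hv0 : 0 ≤ v) (hv : v ≤ 1)
    {a b : ℝ} (ha : 0 < a) (hb : 0 < b) :
    IntervalIntegrable (fun t : ℝ => t ^ (a-1) * (1-t) ^ (b-1)) volume u v :=
  (betaIntegrable ha hb).mono_set (by
    rw [uIcc_of_le (by norm_num : (0:ℝ) ≤ 1)]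
    exact uIcc_subset_Icc ⟨hu, hu1⟩ ⟨hv0, hv⟩)

lemma betaFn_succ_left : betaFn (α+1) β = (α/(α+β)) * betaFn α β := by
  have h0α : 0 < α := lt_trans hβ hαβ
  have h1 : α + 1 + β = (α + β) + 1 := by ring
  rw [betaFn, betaFn, h1, Real.Gamma_add_one (by positivity : α ≠ 0),
    Real.Gamma_add_one (by positivity : α + β ≠ 0)]
  have := (Real.Gamma_pos_of_pos (by positivity : (0:ℝ) < α + β)).ne'
  field_simp

lemma key_ineq : (∫ t in (1/2:ℝ)..1, t ^ (α-1) * (1-t) ^ (β-1)) > (α/(α+β)) * betaFn α β := by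
  have h0α : 0 < α := hα hβ hαβ
  -- names
  set f : ℝ → ℝ := fun t => t ^ (α-1) * (1-t) ^ ((β+1)-1) with hfdef
  set g : ℝ → ℝ := fun t => t ^ ((α+1)-1) * (1-t) ^ (β-1) with hgdef
  have hfint : IntervalIntegrable f volume (1/2) 1 :=
    int_dens_sub hβ hαβ (1/2) 1 (by norm_num) (by norm_num) (by norm_num) le_rfl h0α (by linarith)
  have hgint01 : IntervalIntegrable g volume 0 (1/2) :=
    int_dens_sub hβ hαβ 0 (1/2) le_rfl (by norm_num) (by norm_num) (by norm_num) (by linarith) hβ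
  have hgint11 : IntervalIntegrable g volume (1/2) 1 :=
    int_dens_sub hβ hαβ (1/2) 1 (by norm_num) (by norm_num) (by norm_num) le_rfl (by linarith) hβ
  -- split: ∫_{1/2}^1 dens = ∫ g + ∫ f on [1/2,1]
  have hsplit : (∫ t in (1/2:ℝ)..1, t ^ (α-1) * (1-t) ^ (β-1))
      = (∫ t in (1/2:ℝ)..1, g t) + (∫ t in (1/2:ℝ)..1, f t) := by
    rw [← intervalIntegral.integral_add hgint11 hfint]
    rw [intervalIntegral.integral_of_le (by norm_num : (1/2:ℝ) ≤ 1),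
      intervalIntegral.integral_of_le (by norm_num : (1/2:ℝ) ≤ 1),
      MeasureTheory.integral_Ioc_eq_integral_Ioo, MeasureTheory.integral_Ioc_eq_integral_Ioo]
    apply setIntegral_congr_fun measurableSet_Ioo
    intro t ht
    obtain ⟨ht0, ht1⟩ := ht
    have h01 : (0:ℝ) < t := by linarith
    have h1t : (0:ℝ) < 1 - t := by linarith
    simp only [hfdef, hgdef]
    have e1 : t ^ ((α+1)-1) = t ^ (α-1) * t := by
      rw [show (α+1)-1 = (α-1) + 1 by ring, Real.rpow_add h01, Real.rpow_one]
    have e2 : (1-t) ^ ((β+1)-1) = (1-t) ^ (β-1) * (1-t) := by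
      rw [show (β+1)-1 = (β-1) + 1 by ring, Real.rpow_add h1t, Real.rpow_one]
    rw [e1, e2]
    ring
  -- whole integral of g = betaFn (α+1) β
  have hg01 : (∫ t in (0:ℝ)..1, g t) = betaFn (α+1) β :=
    betaIntegral_eq (by linarith) hβ
  have hgsum : (∫ t in (0:ℝ)..(1/2:ℝ), g t) + (∫ t in (1/2:ℝ)..1, g t) = betaFn (α+1) β := by
    rw [← hg01, intervalIntegral.integral_add_adjacent_intervals hgint01 hgint11]
  -- the substitution: ∫_{1/2}^1 f = ∫_0^{1/2} f(1-x)
  have hsub : (∫ t in (1/2:ℝ)..1, f t) = ∫ x in (0:ℝ)..(1/2:ℝ), f (1-x) := by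
    rw [intervalIntegral.integral_comp_sub_left f 1]
    norm_num
  -- strict inequality : ∫_0^{1/2} (f(1-x) - g x) > 0
  have hfint' : IntervalIntegrable (fun x => f (1-x)) volume 0 (1/2) := by
    have := hfint.comp_sub_left 1
    norm_num at this
    exact this.symm
  have hpos : 0 < ∫ x in (0:ℝ)..(1/2:ℝ), (f (1-x) - g x) := by
    apply intervalIntegral.intervalIntegral_pos_of_pos_on (hfint'.sub hgint01)
    · intro x hx
      obtain ⟨hx0, hx1⟩ := hx
      have hx2 : x < 1 - x := by linarith
      have hx3 : (0:ℝ) < 1 - x := by linarith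
      simp only [hfdef, hgdef, sub_sub_cancel]
      have e1 : (1-x) ^ (α-1) = (1-x) ^ (β-1) * (1-x) ^ (α-β) := by
        rw [← Real.rpow_add hx3]; ring_nf
      have e2 : x ^ ((α+1)-1) = x ^ β * x ^ (α-β) := by
        rw [← Real.rpow_add hx0]; ring_nf
      have e3 : x ^ ((β+1)-1) = x ^ β := by norm_num
      rw [e1, e2, e3, sub_pos]
      have h4 : x ^ (α-β) < (1-x) ^ (α-β) :=
        Real.rpow_lt_rpow hx0.le hx2 (by linarith)
      have h5 : (0:ℝ) < x ^ β * (1-x) ^ (β-1) := by positivity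
      calc x ^ β * x ^ (α-β) * (1-x) ^ (β-1) = (x ^ β * (1-x) ^ (β-1)) * x ^ (α-β) := by ring
        _ < (x ^ β * (1-x) ^ (β-1)) * (1-x) ^ (α-β) := by
            exact mul_lt_mul_of_pos_left h4 h5
        _ = (1-x) ^ (β-1) * (1-x) ^ (α-β) * x ^ β := by ring
    · norm_num
  have hdiff : (∫ x in (0:ℝ)..(1/2:ℝ), (f (1-x) - g x))
      = (∫ x in (0:ℝ)..(1/2:ℝ), f (1-x)) - (∫ x in (0:ℝ)..(1/2:ℝ), g x) :=
    intervalIntegral.integral_sub hfint' hgint01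
  rw [← betaFn_succ_left hβ hαβ, hsplit, ← hgsum]
  rw [hsub]
  linarith [hdiff ▸ hpos]

end Ineq

lemma main_tendsto {α β : ℝ} (hα : 0 < α) (hβ : 0 < β) :
    Tendsto (fun n : ℕ => ∫ t in (0:ℝ)..1, binomTail n t * (t ^ (α-1) * (1-t) ^ (β-1)))
      atTop (nhds (∫ t in (1/2:ℝ)..1, t ^ (α-1) * (1-t) ^ (β-1))) := by
  set dens : ℝ → ℝ := fun t => t ^ (α-1) * (1-t) ^ (β-1) with hdens
  set μ := volume.restrict (Ioc (0:ℝ) 1) with hμ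
  have hInd : Tendsto (fun n : ℕ => ∫ t, binomTail n t * dens t ∂μ) atTop
      (nhds (∫ t, (Ioi (1/2:ℝ)).indicator dens t ∂μ)) := by
    apply MeasureTheory.tendsto_integral_of_dominated_convergence dens
    · -- AESM
      intro n
      rw [hμ, ← Measure.restrict_congr_set Ioo_ae_eq_Ioc]
      apply ContinuousOn.aestronglyMeasurable _ measurableSet_Ioo
      apply ContinuousOn.mul _ densContinuousOn
      apply Continuous.continuousOn
      unfold binomTail
      exact continuous_finset_sum _ (fun k _ => by continuity)
    · -- integrable bound
      exact (intervalIntegrable_iff_integrableOn_Ioc_of_le (by norm_num : (0:ℝ) ≤ 1)).mp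
        (betaIntegrable hα hβ)
    · -- bound
      intro n
      rw [hμ]
      filter_upwards [ae_restrict_mem measurableSet_Ioc] with t ht
      obtain ⟨ht0, ht1⟩ := ht
      have hd : 0 ≤ dens t := by
        have : (0:ℝ) ≤ 1 - t := by linarith
        positivity
      have h0 := binomTail_nonneg n ht0.le ht1
      have h1 := binomTail_le_one n ht0.le ht1
      rw [Real.norm_eq_abs, abs_of_nonneg (by positivity)]
      nlinarith
    · -- ae tendsto
      have hne : ∀ᵐ t : ℝ ∂volume, t ∉ ({1/2, 1} : Set ℝ) := by
        have : volume ({1/2, 1} : Set ℝ) = 0 :=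
          ((Set.finite_singleton (1:ℝ)).insert (1/2)).measure_zero volume
        exact measure_eq_zero_iff_ae_notMem.mp this
      rw [hμ]
      filter_upwards [ae_restrict_mem measurableSet_Ioc, ae_restrict_of_ae hne] with t ht hnet
      obtain ⟨ht0, ht1⟩ := ht
      simp only [mem_insert_iff, mem_singleton_iff, not_or] at hnet
      obtain ⟨hne2, hne1⟩ := hnet
      have ht1' : t < 1 := lt_of_le_of_ne ht1 hne1
      rcases lt_or_gt_of_ne hne2 with hlt | hgt
      · -- t < 1/2 : tends to 0; indicator = 0
        have : (Ioi (1/2:ℝ)).indicator dens t = 0 := by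
          apply indicator_of_notMem
          simp only [mem_Ioi, not_lt]; linarith
        rw [this]
        simpa using (tendsto_binomTail_zero ht0 hlt).mul_const (dens t)
      · -- t > 1/2
        have : (Ioi (1/2:ℝ)).indicator dens t = dens t :=
          indicator_of_mem (by simpa using hgt) dens
        rw [this]
        simpa using (tendsto_binomTail_one hgt ht1').mul_const (dens t)
  have hIeq : (∫ t, (Ioi (1/2:ℝ)).indicator dens t ∂μ)
      = ∫ t in (1/2:ℝ)..1, dens t := by
    rw [MeasureTheory.integral_indicator measurableSet_Ioi, hμ,
      Measure.restrict_restrict measurableSet_Ioi,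
      show (Ioi (1/2:ℝ) ∩ Ioc 0 1) = Ioc (1/2) 1 by
        ext x; simp only [mem_inter_iff, mem_Ioi, mem_Ioc]; constructor
        · rintro ⟨h1, h2, h3⟩; exact ⟨h1, h3⟩
        · rintro ⟨h1, h2⟩; exact ⟨h1, by linarith, h2⟩,
      intervalIntegral.integral_of_le (by norm_num : (1/2:ℝ) ≤ 1)]
  have hconv : ∀ n : ℕ, (∫ t, binomTail n t * dens t ∂μ)
      = ∫ t in (0:ℝ)..1, binomTail n t * dens t := by
    intro n
    rw [intervalIntegral.integral_of_le (by norm_num : (0:ℝ) ≤ 1), hμ]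
  rw [← hIeq]
  exact hInd.congr (fun n => hconv n)

/-- For `X_n ~ Beta-Binomial(n;α,β)` with `α > β > 0`,
`lim_n P(X_n ≥ ⌊n/2⌋+1) = 1 - I_{1/2}(α,β) > α/(α+β)`. -/
theorem betaBinomial_majority_limit (α β : ℝ) (hβ : 0 < β) (hαβ : β < α) :
    Tendsto (fun n : ℕ => ∑ k ∈ Finset.Icc (n / 2 + 1) n, betaBinomialWeight n α β k)
      atTop (nhds (1 - regIncBeta (1/2) α β))
    ∧ 1 - regIncBeta (1/2) α β > α / (α + β) := by
  have hα : 0 < α := lt_trans hβ hαβ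
  have hB : 0 < betaFn α β := betaFn_pos hα hβ
  set dens : ℝ → ℝ := fun t => t ^ (α-1) * (1-t) ^ (β-1) with hdens
  have hI0 : (∫ t in (0:ℝ)..(1/2:ℝ), dens t) + (∫ t in (1/2:ℝ)..1, dens t) = betaFn α β := by
    rw [intervalIntegral.integral_add_adjacent_intervals
      (int_dens_sub hβ hαβ 0 (1/2) le_rfl (by norm_num) (by norm_num) (by norm_num) hα hβ)
      (int_dens_sub hβ hαβ (1/2) 1 (by norm_num) (by norm_num) (by norm_num) le_rfl hα hβ)]
    exact betaIntegral_eq hα hβ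
  have hval : 1 - regIncBeta (1/2) α β = (∫ t in (1/2:ℝ)..1, dens t) / betaFn α β := by
    rw [regIncBeta]
    field_simp
    linarith
  constructor
  · rw [hval]
    have hS : ∀ n : ℕ, ∑ k ∈ Finset.Icc (n / 2 + 1) n, betaBinomialWeight n α β k
        = (∫ t in (0:ℝ)..1, binomTail n t * dens t) / betaFn α β := by
      intro n
      rw [sum_weight_eq n α β hα hβ]
      rfl
    simp only [hS]
    exact (main_tendsto hα hβ).div_const _
  · rw [hval, gt_iff_lt, lt_div_iff₀ hB]
    exact key_ineq hβ hαβ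
end

section
/- Let α_1,...,α_m > 0, α_0 = Σα_i, and let w(k) = ∏_{i=1}^m C(α_i+k_i-1, k_i) for k ∈ ℤ_{≥0}^m with Σk_i = n. For i ≠ j with k_j ≥ 1 and k' = k + e_i - e_j, the ratio w(k')/w(k) equals ((α_i+k_i)/(k_i+1))·(k_j/(α_j+k_j-1)). Consequently, w satisfies detailed balance with respect to the multistate zealot copy kernel Q(k → k+e_i−e_j) = (k_j/n)·((k_i+α_i)/(n-1+α_0)): w(k)·Q(k→k') = w(k')·Q(k'→k). -/
/-- Generalized binomial coefficient `C(a+r-1, r) = (a)_r / r!`. -/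
noncomputable def genBinom (a : ℝ) (r : ℕ) : ℝ :=
  risingFactorial a r / (r.factorial : ℝ)

lemma genBinom_pos {a : ℝ} (ha : 0 < a) (r : ℕ) : 0 < genBinom a r :=
  div_pos (risingFactorial_pos ha r) (by positivity)

lemma genBinom_succ (a : ℝ) (r : ℕ) :
    genBinom a (r + 1) = genBinom a r * ((a + r) / (r + 1)) := by
  have h1 : (r.factorial : ℝ) ≠ 0 := by positivity
  have h2 : ((r : ℝ) + 1) ≠ 0 := by positivity
  simp only [genBinom, risingFactorial, Nat.factorial_succ]
  push_cast
  rw [div_mul_div_comm, mul_comm ((r : ℝ) + 1) (r.factorial : ℝ)]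

/-- Detailed balance for the multistate zealot copy kernel.  With
`w(k) = ∏ᵢ C(αᵢ+kᵢ-1, kᵢ)` and `k' = k + e_i - e_j` (for `i ≠ j`, `k_j ≥ 1`):
`w(k')/w(k) = ((αᵢ+kᵢ)/(kᵢ+1))·(k_j/(α_j+k_j-1))`, and
`w(k)·Q(k→k') = w(k')·Q(k'→k)` where
`Q(k→k+e_i−e_j) = (k_j/n)·((kᵢ+αᵢ)/(n-1+α₀))`. -/
theorem multistate_detailed_balance (m n : ℕ) (α : Fin m → ℝ) (hα : ∀ i, 0 < α i)
    (k : Fin m → ℕ) (hk : ∑ i, k i = n)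
    (i j : Fin m) (hij : i ≠ j) (hkj : 1 ≤ k j)
    (k' : Fin m → ℕ)
    (hk' : k' = fun t => if t = i then k i + 1 else if t = j then k j - 1 else k t) :
    (∏ t, genBinom (α t) (k' t)) / (∏ t, genBinom (α t) (k t))
      = ((α i + k i) / ((k i : ℝ) + 1)) * ((k j : ℝ) / (α j + (k j : ℝ) - 1))
    ∧ (∏ t, genBinom (α t) (k t)) *
        (((k j : ℝ) / n) * (((k i : ℝ) + α i) / ((n : ℝ) - 1 + ∑ t, α t)))
      = (∏ t, genBinom (α t) (k' t)) *
        ((((k i : ℝ) + 1) / n) * (((k j : ℝ) - 1 + α j) / ((n : ℝ) - 1 + ∑ t, α t))) := by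
  have hji : j ≠ i := hij.symm
  have hki' : k' i = k i + 1 := by simp [hk']
  have hkj' : k' j = k j - 1 := by simp [hk', hji]
  have hkjR : (1 : ℝ) ≤ (k j : ℝ) := by exact_mod_cast hkj
  have hαj : 0 < α j + (k j : ℝ) - 1 := by have := hα j; linarith
  have hkjpos : (0 : ℝ) < (k j : ℝ) := by linarith
  have hki1 : (0 : ℝ) < (k i : ℝ) + 1 := by positivity
  -- ratio of genBinoms at i
  have hfi : genBinom (α i) (k' i)
      = genBinom (α i) (k i) * ((α i + k i) / ((k i : ℝ) + 1)) := by
    rw [hki', genBinom_succ]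
  -- ratio at j
  have hfj : genBinom (α j) (k' j)
      = genBinom (α j) (k j) * ((k j : ℝ) / (α j + (k j : ℝ) - 1)) := by
    obtain ⟨r, hr⟩ : ∃ r, k j = r + 1 := ⟨k j - 1, (Nat.succ_pred_eq_of_pos hkj).symm⟩
    have hrc : (r : ℝ) = (k j : ℝ) - 1 := by
      have : ((r : ℝ) + 1) = (k j : ℝ) := by exact_mod_cast hr.symm
      linarith
    have hkj'' : k' j = r := by omega
    have key : genBinom (α j) (k j)
        = genBinom (α j) (k' j) * ((α j + (k j : ℝ) - 1) / (k j : ℝ)) := by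
      conv_lhs => rw [hr]
      rw [genBinom_succ, hkj'', hrc]
      have h1 : α j + ((k j : ℝ) - 1) = α j + (k j : ℝ) - 1 := by ring
      have h2 : (k j : ℝ) - 1 + 1 = (k j : ℝ) := by ring
      rw [h1, h2]
    rw [key, mul_assoc, div_mul_div_comm,
      mul_comm (α j + (k j : ℝ) - 1) (k j : ℝ),
      div_self (mul_pos hkjpos hαj).ne', mul_one]
  -- products
  have hPpos : 0 < ∏ t, genBinom (α t) (k t) :=
    Finset.prod_pos fun t _ => genBinom_pos (hα t) _
  have hprod : (∏ t, genBinom (α t) (k' t))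
      = (∏ t, genBinom (α t) (k t))
        * (((α i + k i) / ((k i : ℝ) + 1)) * ((k j : ℝ) / (α j + (k j : ℝ) - 1))) := by
    have hjmem : j ∈ Finset.univ.erase i := by simp [hji]
    have e1 := Finset.mul_prod_erase Finset.univ (fun t => genBinom (α t) (k' t))
      (Finset.mem_univ i)
    have e2 := Finset.mul_prod_erase (Finset.univ.erase i)
      (fun t => genBinom (α t) (k' t)) hjmem
    have e3 := Finset.mul_prod_erase Finset.univ (fun t => genBinom (α t) (k t))
      (Finset.mem_univ i)
    have e4 := Finset.mul_prod_erase (Finset.univ.erase i)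
      (fun t => genBinom (α t) (k t)) hjmem
    have erest : ∏ t ∈ (Finset.univ.erase i).erase j, genBinom (α t) (k' t)
        = ∏ t ∈ (Finset.univ.erase i).erase j, genBinom (α t) (k t) := by
      refine Finset.prod_congr rfl fun t ht => ?_
      simp only [Finset.mem_erase] at ht
      simp [hk', ht.1, ht.2.1]
    rw [← e1, ← e2, ← e3, ← e4, erest]
    simp only [hfi, hfj]
    ring
  constructor
  · rw [hprod, mul_comm]
    exact mul_div_cancel_right₀ _ hPpos.ne'
  · have hn1 : 1 ≤ n := by
      rw [← hk]
      exact le_trans hkj (Finset.single_le_sum (fun t _ => Nat.zero_le _) (Finset.mem_univ j))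
    have hnR : (1 : ℝ) ≤ (n : ℝ) := by exact_mod_cast hn1
    have hn0 : (n : ℝ) ≠ 0 := by linarith
    have hS : 0 < ∑ t, α t := Finset.sum_pos (fun t _ => hα t) ⟨i, Finset.mem_univ i⟩
    have hD : (0:ℝ) < (n : ℝ) - 1 + ∑ t, α t := by linarith
    have hD' : ((n : ℝ) - 1 + ∑ t, α t) ≠ 0 := hD.ne'
    rw [hprod]
    have h3 : (k j : ℝ) - 1 + α j = α j + (k j : ℝ) - 1 := by ring
    rw [h3]
    field_simp
    ring
end
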